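/- Let G be a compact Lie group acting on a completely regular Hausdorff space X with only one orbit type (G/H) for a closed subgroup H. Then the map Φ: G ×_{NH} X^H → X, [g, x] ↦ gx, is a G-equivariant homeomorphism, where NH is the normalizer of H and X^H is the H-fixed point set. -/

import Mathlib

open Filter Topology

/-- In a compact topological group, `a⁻¹` lies in the closure of positive powers of `a`. -/
theorem inv_mem_closure_pow {G : Type*} [Group G] [TopologicalSpace G] [IsTopologicalGroup G]
    [CompactSpace G] (a : G) : a⁻¹ ∈ closure (Set.range fun n : ℕ => a ^ (n + 1)) := by
  -- get a cluster point of the sequence of powers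
  obtain ⟨c, hc⟩ := exists_clusterPt_of_compactSpace (Filter.map (fun n : ℕ => a ^ n) atTop)
  rw [mem_closure_iff_nhds]
  intro U hU
  -- W ∈ 𝓝 1 with a⁻¹ * W ⊆ U-like behaviour
  have hW : (fun g => a⁻¹ * g) ⁻¹' U ∈ 𝓝 (1 : G) := by
    have : ContinuousAt (fun g => a⁻¹ * g) (1 : G) := (continuous_mul_left a⁻¹).continuousAt
    exact this (by simpa using hU)
  set W : Set G := (fun g => a⁻¹ * g) ⁻¹' U with hWdef
  have hW' : (fun g => c * g * c⁻¹) ⁻¹' W ∈ 𝓝 (1 : G) := by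
    have hcont : ContinuousAt (fun g => c * g * c⁻¹) (1 : G) :=
      ((continuous_mul_left c).mul continuous_const).continuousAt
    refine hcont ?_
    simpa using hW
  obtain ⟨V₀, hV₀open, hV₀1, hV₀⟩ := exists_open_nhds_one_mul_subset hW'
  set V : Set G := V₀ ∩ V₀⁻¹ with hVdef
  have hVmem : V ∈ 𝓝 (1 : G) := by
    refine Filter.inter_mem (hV₀open.mem_nhds hV₀1) ?_
    exact (hV₀open.preimage continuous_inv).mem_nhds (by simpa using hV₀1)
  have hVprod : ∀ u ∈ V, ∀ v ∈ V, v * u⁻¹ ∈ (fun g => c * g * c⁻¹) ⁻¹' W := by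
    intro u hu v hv
    exact hV₀ (Set.mul_mem_mul hv.1 hu.2)
  -- a neighborhood of c
  have hcV : (fun g => c⁻¹ * g) ⁻¹' V ∈ 𝓝 c := by
    have hcont : ContinuousAt (fun g => c⁻¹ * g) c := (continuous_mul_left c⁻¹).continuousAt
    exact hcont (by simpa using hVmem)
  have hmc : MapClusterPt c atTop (fun n : ℕ => a ^ n) := hc
  have hfreq : ∃ᶠ n in atTop, a ^ n ∈ (fun g => c⁻¹ * g) ⁻¹' V :=
    mapClusterPt_iff_frequently.mp hmc _ hcV
  obtain ⟨n, -, hn⟩ := (Filter.frequently_atTop.mp hfreq) 0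
  obtain ⟨m, hm2, hm⟩ := (Filter.frequently_atTop.mp hfreq) (n + 2)
  obtain ⟨k, hk⟩ := Nat.exists_eq_add_of_le hm2
  -- a ^ (k + 2) ∈ W
  have hkey : a ^ (k + 2) ∈ W := by
    have h1 : (c⁻¹ * a ^ m) * (c⁻¹ * a ^ n)⁻¹ ∈ (fun g => c * g * c⁻¹) ⁻¹' W :=
      hVprod _ hn _ hm
    have h2 : c * ((c⁻¹ * a ^ m) * (c⁻¹ * a ^ n)⁻¹) * c⁻¹ = a ^ (k + 2) := by
      have hmeq : m = (k + 2) + n := by omega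
      rw [hmeq, pow_add]
      group
    rw [Set.mem_preimage, h2] at h1
    exact h1
  refine ⟨a ^ (k + 1), ?_, ⟨k, rfl⟩⟩
  have : a⁻¹ * a ^ (k + 2) = a ^ (k + 1) := by
    rw [pow_succ' a (k + 1)]
    group
  rw [← this]
  exact hkey

/-- In a compact group, if conjugation by `a` maps the closed subgroup `H` into itself,
then so does conjugation by `a⁻¹`. -/
theorem conj_inv_mem_of_conj_mem {G : Type*} [Group G] [TopologicalSpace G] [IsTopologicalGroup G]
    [CompactSpace G] {H : Subgroup G} (hH : IsClosed (H : Set G)) {a : G}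
    (h : ∀ x ∈ H, a * x * a⁻¹ ∈ H) : ∀ x ∈ H, a⁻¹ * x * a ∈ H := by
  intro x hx
  have key := inv_mem_closure_pow a
  set φ : G → G := fun g => g * x * g⁻¹ with hφ
  have hφc : Continuous φ := by continuity
  have hmaps : Set.MapsTo φ (Set.range fun n : ℕ => a ^ (n + 1)) (H : Set G) := by
    rintro - ⟨n, rfl⟩
    induction n with
    | zero => simpa [φ] using h x hx
    | succ k ih =>
      have : φ (a ^ (k + 1 + 1)) = a * φ (a ^ (k + 1)) * a⁻¹ := by
        simp only [φ, pow_succ' a (k + 1)]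
        group
      rw [this]
      exact h _ ih
  have := map_mem_closure hφc key hmaps
  rw [hH.closure_eq] at this
  simpa [φ, mul_assoc] using this

section Aux
open scoped Manifold

theorem twisted_product_homeomorphism'
    {n : ℕ} {G : Type*} [Group G] [TopologicalSpace G]
    [ChartedSpace (EuclideanSpace ℝ (Fin n)) G] [LieGroup (𝓡 n) (⊤ : ℕ∞) G] [CompactSpace G]
    {X : Type*} [TopologicalSpace X] [CompletelyRegularSpace X] [T2Space X]
    [MulAction G X] [ContinuousSMul G X]
    (H : Subgroup G) (hclosed : IsClosed (H : Set G))
    (hone : ∀ x : X, ∃ g : G,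
      MulAction.stabilizer G x = H.map (MulAut.conj g).toMonoidHom)
    (nhSetoid : Setoid (G × {x : X // ∀ h ∈ H, h • x = x}))
    (hset : ∀ p q, nhSetoid.r p q ↔
      ∃ m ∈ Subgroup.normalizer (H : Set G), q.1 = p.1 * m ∧ (q.2 : X) = m⁻¹ • (p.2 : X)) :
    ∃ Φ : Quotient nhSetoid → X,
      IsHomeomorph Φ ∧
      ∀ (g : G) (x : {x : X // ∀ h ∈ H, h • x = x}),
        Φ (Quotient.mk nhSetoid (g, x)) = g • (x : X) := by
  haveI : IsTopologicalGroup G := topologicalGroup_of_lieGroup (𝓡 n) (⊤ : ℕ∞)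
  set f : G × {x : X // ∀ h ∈ H, h • x = x} → X := fun p => p.1 • (p.2 : X) with hf
  -- f respects the relation
  have hresp : ∀ p q : G × {x : X // ∀ h ∈ H, h • x = x}, nhSetoid.r p q → f p = f q := by
    intro p q hr
    obtain ⟨m, hm, h1, h2⟩ := (hset p q).mp hr
    simp only [f, h1, h2, mul_smul, smul_inv_smul]
  refine ⟨Quotient.lift f hresp, ?_, fun g x => rfl⟩
  have hfc : Continuous f := continuous_fst.smul (continuous_subtype_val.comp continuous_snd)
  have hΦc : Continuous (Quotient.lift f hresp) := hfc.quotient_lift hresp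
  -- every stabilizer of a point of F is H
  have hstab : ∀ x : {x : X // ∀ h ∈ H, h • x = x}, MulAction.stabilizer G (x : X) = H := by
    intro x
    obtain ⟨k, hk⟩ := hone (x : X)
    have hHle : H ≤ MulAction.stabilizer G (x : X) := fun h hh => x.2 h hh
    have h1 : ∀ h ∈ H, k⁻¹ * h * k ∈ H := by
      intro h hh
      have : h ∈ H.map (MulAut.conj k).toMonoidHom := hk ▸ hHle hh
      obtain ⟨u, hu, rfl⟩ := Subgroup.mem_map.mp this
      simpa [MulAut.conj_apply, mul_assoc] using hu
    have h2 : ∀ h ∈ H, k * h * k⁻¹ ∈ H := by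
      have := conj_inv_mem_of_conj_mem hclosed (a := k⁻¹)
        (by intro h hh; simpa using h1 h hh)
      simpa using this
    refine le_antisymm ?_ hHle
    rw [hk]
    rintro - ⟨u, hu, rfl⟩
    simpa [MulAut.conj_apply] using h2 u hu
  -- bijectivity
  have hbij : Function.Bijective (Quotient.lift f hresp) := by
    constructor
    · rintro ⟨⟨g₁, x₁⟩⟩ ⟨⟨g₂, x₂⟩⟩ heq
      have heq' : g₁ • (x₁ : X) = g₂ • (x₂ : X) := heq
      refine Quotient.sound ((hset _ _).mpr ⟨g₁⁻¹ * g₂, ?_, (mul_inv_cancel_left g₁ g₂).symm, ?_⟩)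
      · -- normalizer membership
        have hx1 : (x₁ : X) = (g₁⁻¹ * g₂) • (x₂ : X) := by
          rw [mul_smul, ← heq', inv_smul_smul]
        have hmap : (MulAction.stabilizer G ((x₂ : X))).map
            (MulAut.conj (g₁⁻¹ * g₂)).toMonoidHom = MulAction.stabilizer G (x₁ : X) := by
          rw [← MulAction.stabilizer_smul_eq_stabilizer_map_conj, ← hx1]
        rw [hstab x₁, hstab x₂] at hmap
        refine Subgroup.mem_normalizer_iff.mpr fun h => ⟨fun hh => ?_, fun hh => ?_⟩
        · rw [← hmap]
          exact ⟨h, hh, rfl⟩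
        · rw [← hmap] at hh
          obtain ⟨u, hu, huv⟩ := Subgroup.mem_map.mp hh
          have : u = h := by
            have := huv
            simp only [MulEquiv.coe_toMonoidHom, MulAut.conj_apply] at this
            exact mul_left_cancel (mul_right_cancel this)
          rwa [← this]
      · simp only [mul_inv_rev, inv_inv, mul_smul, heq', inv_smul_smul]
    · intro y
      obtain ⟨g, hg⟩ := hone y
      have hfix : ∀ h ∈ H, h • (g⁻¹ • y) = g⁻¹ • y := by
        intro h hh
        have : g * h * g⁻¹ ∈ MulAction.stabilizer G y := by
          rw [hg]; exact ⟨h, hh, rfl⟩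
        have hy : (g * h * g⁻¹) • y = y := this
        calc h • g⁻¹ • y = g⁻¹ • (g * h * g⁻¹) • y := by
              simp [mul_smul, inv_smul_smul]
          _ = g⁻¹ • y := by rw [hy]
      exact ⟨Quotient.mk nhSetoid (g, ⟨g⁻¹ • y, hfix⟩), smul_inv_smul g y⟩
  -- f is a closed map
  have hFclosed : IsClosed {x : X | ∀ h ∈ H, h • x = x} := by
    have : {x : X | ∀ h ∈ H, h • x = x} = ⋂ h ∈ H, {x : X | h • x = x} := by
      ext x; simp [Set.mem_iInter]
    rw [this]
    exact isClosed_biInter fun h _ => isClosed_eq (continuous_const_smul h) continuous_id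
  have hι : IsClosedEmbedding
      (Prod.map (id : G → G) (Subtype.val : {x : X // ∀ h ∈ H, h • x = x} → X)) :=
    ⟨Topology.IsEmbedding.id.prodMap (Topology.IsClosedEmbedding.subtypeVal hFclosed).toIsEmbedding,
      by rw [Set.range_prodMap, Set.range_id, Subtype.range_coe_subtype]
         exact isClosed_univ.prod hFclosed⟩
  let sh : G × X ≃ₜ G × X :=
    { toFun := fun p => (p.1, p.1 • p.2)
      invFun := fun p => (p.1, p.1⁻¹ • p.2)
      left_inv := fun p => by simp
      right_inv := fun p => by simp
      continuous_toFun := continuous_fst.prodMk (continuous_fst.smul continuous_snd)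
      continuous_invFun := continuous_fst.prodMk (continuous_fst.inv.smul continuous_snd) }
  have hfclosedmap : IsClosedMap f := by
    have : f = Prod.snd ∘ sh ∘ Prod.map (id : G → G)
        (Subtype.val : {x : X // ∀ h ∈ H, h • x = x} → X) := rfl
    rw [this]
    exact isClosedMap_snd_of_compactSpace.comp (sh.isClosedMap.comp hι.isClosedMap)
  have hΦclosed : IsClosedMap (Quotient.lift f hresp) := by
    intro A hA
    have himg : Quotient.lift f hresp '' A = f '' (Quotient.mk nhSetoid ⁻¹' A) := by
      conv_lhs => rw [← Set.image_preimage_eq A (Quotient.mk_surjective (s := nhSetoid))]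
      rw [← Set.image_comp]
      rfl
    rw [himg]
    exact hfclosedmap _ (hA.preimage continuous_quot_mk)
  refine ⟨hΦc, ?_, hbij⟩
  intro U hU
  have : Quotient.lift f hresp '' U = (Quotient.lift f hresp '' Uᶜ)ᶜ := by
    rw [Set.image_compl_eq hbij, compl_compl]
  rw [this]
  exact (hΦclosed _ hU.isClosed_compl).isOpen_compl

end Aux
open scoped Manifold

/-- The equivalence relation on `G × X^H` whose quotient is the twisted product
`G ×_{NH} X^H` : `(g, x) ∼ (g n, n⁻¹ x)` for `n ∈ NH`. -/
def nhSetoid (G : Type*) [Group G] (X : Type*) [MulAction G X] (H : Subgroup G) :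
    Setoid (G × {x : X // ∀ h ∈ H, h • x = x}) where
  r p q := ∃ n ∈ (Subgroup.normalizer (H : Set G)), q.1 = p.1 * n ∧ (q.2 : X) = n⁻¹ • (p.2 : X)
  iseqv := by
    constructor
    · intro p; exact ⟨1, (Subgroup.normalizer (H : Set G)).one_mem, by simp, by simp⟩
    · rintro p q ⟨n, hn, h1, h2⟩
      exact ⟨n⁻¹, (Subgroup.normalizer (H : Set G)).inv_mem hn, by rw [h1]; group, by rw [h2]; simp⟩
    · rintro p q r ⟨n, hn, h1, h2⟩ ⟨m, hm, h3, h4⟩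
      exact ⟨n * m, (Subgroup.normalizer (H : Set G)).mul_mem hn hm,
        by rw [h3, h1, mul_assoc],
        by rw [h4, h2, mul_inv_rev, mul_smul]⟩

/-- for `G` a compact Lie group acting continuously on a completely regular
Hausdorff space `X` with only one orbit type `(G/H)` (all isotropy groups conjugate to the
closed subgroup `H`), the map `Φ : G ×_{NH} X^H → X`, `[g, x] ↦ g • x`, is a `G`-equivariant
homeomorphism (equivariance is the displayed formula, since `G` acts on the twisted product
through the first coordinate). -/
theorem twisted_product_homeomorphism
    {n : ℕ} {G : Type*} [Group G] [TopologicalSpace G]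
    [ChartedSpace (EuclideanSpace ℝ (Fin n)) G] [LieGroup (𝓡 n) (⊤ : ℕ∞) G] [CompactSpace G]
    {X : Type*} [TopologicalSpace X] [CompletelyRegularSpace X] [T2Space X]
    [MulAction G X] [ContinuousSMul G X]
    (H : Subgroup G) (hclosed : IsClosed (H : Set G))
    (hone : ∀ x : X, ∃ g : G,
      MulAction.stabilizer G x = H.map (MulAut.conj g).toMonoidHom) :
    ∃ Φ : Quotient (nhSetoid G X H) → X,
      IsHomeomorph Φ ∧
      ∀ (g : G) (x : {x : X // ∀ h ∈ H, h • x = x}),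
        Φ (Quotient.mk (nhSetoid G X H) (g, x)) = g • (x : X) := by
  exact twisted_product_homeomorphism' (n := n) H hclosed hone (nhSetoid G X H)
    (fun p q => Iff.rfl)
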